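/- arXiv:2402.04890 — 2 statements merged into one kernel-verified Lean document; each statement's English description precedes it below -/
import Mathlib

section
/- Let u ∈ VT_a(k+1;k) and let v be any binary vector of length k obtained from u by first deleting one bit and then inserting one bit (at arbitrary positions). Then exactly one of the following holds: v = u, or v ∉ VT_a(k+1;k). -/
/-!
Deleting the bit `c` and inserting the bit `b` moves a symbol across a block `y`: the word
`x ++ c :: y ++ w` becomes `x ++ y ++ b :: w` (or the other way round). The change of the VT
syndrome is an explicit integer of absolute value at most `|x| + |y| + 1 ≤ k`, so it vanishes
modulo `k + 1` only if it vanishes outright, which forces `b = c` and `y` to be constant equal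
to `c`; then the move does not change the word.
-/

def vtSyn (l : List Bool) : ℕ :=
  ∑ i : Fin l.length, ((i : ℕ) + 1) * (if l.get i then 1 else 0)

namespace List

variable {α : Type*}

theorem insertIdx_eq_take_append_cons_drop {l : List α} {j : ℕ} (h : j ≤ l.length) (b : α) :
    l.insertIdx j b = l.take j ++ b :: l.drop j := by
  induction l generalizing j with
  | nil => simp_all
  | cons a t ih =>
    cases j with
    | zero => simp
    | succ j => simp [ih (Nat.le_of_succ_le_succ h)]

theorem exists_eq_append_cons_of_eraseIdx {l : List α} {i : ℕ} (h : i < l.length) :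
    ∃ y c w, l = y ++ c :: w ∧ l.eraseIdx i = y ++ w :=
  ⟨l.take i, l[i], l.drop (i + 1), by simp, eraseIdx_eq_take_drop_succ l i⟩

theorem exists_move_of_eraseIdx_insertIdx {l : List α} {i j : ℕ} (hi : i < l.length)
    (hj : j < l.length) (b : α) : ∃ x y w c,
      (l = x ++ c :: y ++ w ∧ (l.eraseIdx i).insertIdx j b = x ++ y ++ b :: w) ∨
      (l = x ++ y ++ c :: w ∧ (l.eraseIdx i).insertIdx j b = x ++ b :: y ++ w) := by
  induction l generalizing i j with
  | nil => simp at hi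
  | cons a t ih =>
    cases i with
    | zero =>
      refine ⟨[], t.take j, t.drop j, a, .inl ⟨by simp, ?_⟩⟩
      simp [insertIdx_eq_take_append_cons_drop (by simpa using hj : j ≤ t.length)]
    | succ i =>
      cases j with
      | zero =>
        obtain ⟨y, c, w, hl, he⟩ := exists_eq_append_cons_of_eraseIdx hi
        exact ⟨[], y, w, c, .inr ⟨by simpa using hl, by simp [insertIdx_zero, ← he]⟩⟩
      | succ j =>
        obtain ⟨x, y, w, c, h⟩ :=
          ih (Nat.lt_of_succ_lt_succ hi) (Nat.lt_of_succ_lt_succ hj)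
        refine ⟨a :: x, y, w, c, ?_⟩
        rcases h with ⟨rfl, he⟩ | ⟨rfl, he⟩ <;>
          simp only [eraseIdx_cons_succ, insertIdx_succ_cons, he, cons_append, true_and,
            true_or, or_true]

theorem cons_eq_append_singleton_of_forall_eq {l : List α} {a : α} (h : ∀ b ∈ l, b = a) :
    a :: l = l ++ [a] := by
  rw [eq_replicate_iff.mpr ⟨rfl, h⟩, ← replicate_succ, replicate_succ']

theorem sum_map_toNat_eq_count_true (l : List Bool) : (l.map Bool.toNat).sum = l.count true := by
  induction l with
  | nil => rfl
  | cons c t ih => cases c <;> simp [ih]; omega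

end List

theorem vtSyn_nil : vtSyn [] = 0 := rfl

theorem vtSyn_cons (c : Bool) (l : List Bool) :
    vtSyn (c :: l) = c.toNat + vtSyn l + l.count true := by
  have hcount : ∑ i : Fin l.length, l[i.1].toNat = l.count true := by
    rw [Fin.sum_univ_fun_getElem, l.sum_map_toNat_eq_count_true]
  simp only [vtSyn, List.length_cons, Fin.sum_univ_succ, ← hcount, List.get_eq_getElem,
    add_assoc, ← Finset.sum_add_distrib]
  refine congrArg₂ (· + ·) (by cases c <;> rfl) (Finset.sum_congr rfl fun i _ => ?_)
  simp only [Fin.val_succ, List.getElem_cons_succ]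
  split_ifs with h <;> simp [h]

theorem vtSyn_append (l₁ l₂ : List Bool) :
    vtSyn (l₁ ++ l₂) = vtSyn l₁ + vtSyn l₂ + l₁.length * l₂.count true := by
  induction l₁ with
  | nil => simp [vtSyn_nil]
  | cons c t ih =>
    simp only [List.cons_append, vtSyn_cons, ih, List.count_append, List.length_cons]
    ring

theorem vtSyn_move (x y w : List Bool) (c b : Bool) :
    (vtSyn (x ++ c :: y ++ w) : ℤ) - vtSyn (x ++ y ++ b :: w) =
      (x.length + 1) * c.toNat + y.count true - (x.length + y.length + 1) * b.toNat := by
  simp only [vtSyn_append, vtSyn_cons, List.count_cons, List.length_append, List.length_cons]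
  cases b <;> cases c <;> simp <;> ring

theorem eq_of_vtSyn_move {n : ℕ} {x y w : List Bool} {c b : Bool}
    (hn : x.length + y.length + 1 ≤ n)
    (h : (vtSyn (x ++ c :: y ++ w) : ZMod (n + 1)) = vtSyn (x ++ y ++ b :: w)) :
    x ++ c :: y ++ w = x ++ y ++ b :: w := by
  have hdvd : ((n + 1 : ℕ) : ℤ) ∣ (vtSyn (x ++ c :: y ++ w) : ℤ) - vtSyn (x ++ y ++ b :: w) :=
    (ZMod.intCast_zmod_eq_zero_iff_dvd _ _).mp (by push_cast; rw [h, sub_self])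
  rw [vtSyn_move] at hdvd
  have hy : y.count true ≤ y.length := List.count_le_length
  have hzero := Int.eq_zero_of_abs_lt_dvd hdvd <| by
    rw [abs_lt]; cases b <;> cases c <;> simp <;> omega
  obtain ⟨rfl, hyc⟩ : b = c ∧ ∀ d ∈ y, d = c := by
    cases b <;> cases c <;> simp only [Bool.toNat_false, Bool.toNat_true] at hzero
    · exact ⟨rfl, fun d hd => Bool.eq_false_iff.mpr fun hd' =>
        List.count_eq_zero.mp (by omega) (hd' ▸ hd)⟩
    · omega
    · omega
    · exact ⟨rfl, fun d hd => (List.count_eq_length.mp (by omega) d hd).symm⟩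
  rw [List.cons_eq_append_singleton_of_forall_eq hyc]
  simp

theorem stmt2_general (k : ℕ) (a : ZMod (k + 1)) (u v : List Bool)
    (hu : u.length = k) (hua : ((vtSyn u : ℕ) : ZMod (k + 1)) = a)
    (j₁ j₂ : ℕ) (b : Bool) (hj₁ : j₁ < k) (hj₂ : j₂ ≤ k - 1)
    (hv : v = (u.eraseIdx j₁).insertIdx j₂ b) :
    Xor' (v = u) (¬ ((vtSyn v : ℕ) : ZMod (k + 1)) = a) := by
  by_cases hvu : v = u
  · exact .inl ⟨hvu, not_not.mpr (hvu ▸ hua)⟩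
  refine .inr ⟨fun hva => hvu ?_, hvu⟩
  have hsyn : (vtSyn u : ZMod (k + 1)) = vtSyn v := hua.trans hva.symm
  subst hv
  obtain ⟨x, y, w, c, ⟨rfl, hmove⟩ | ⟨rfl, hmove⟩⟩ :=
    List.exists_move_of_eraseIdx_insertIdx (l := u) (i := j₁) (j := j₂) (by omega) (by omega) b
  all_goals
    rw [hmove] at hsyn ⊢
    simp only [List.length_append, List.length_cons] at hu
  · exact (eq_of_vtSyn_move (by omega) hsyn).symm
  · exact eq_of_vtSyn_move (by omega) hsyn.symm

theorem stmt2 (k : ℕ) (hk : 0 < k) (a : ZMod (k + 1)) (u v : List Bool)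
    (hu : u.length = k) (hua : ((vtSyn u : ℕ) : ZMod (k + 1)) = a)
    (j₁ j₂ : ℕ) (b : Bool) (hj₁ : j₁ < k) (hj₂ : j₂ ≤ k - 1)
    (hv : v = (u.eraseIdx j₁).insertIdx j₂ b) (hvl : v.length = k) :
    Xor' (v = u) (¬ ((vtSyn v : ℕ) : ZMod (k + 1)) = a) :=
  stmt2_general k a u v hu hua j₁ j₂ b hj₁ hj₂ hv
end

section
/- Let k ≥ 2 and v ∈ {0,1}^k with 0 < wt_H(v) < k, and suppose v has VT syndrome a modulo 2k. Then the vector u' = 0 v₁ v₂ … v_{k−1} (prepend 0, drop last bit) satisfies: u' ∈ VT_a(2k;k) implies v = 0^k, a contradiction; hence u' ∉ VT_a(2k;k). -/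
/-!
Write `v = w ++ [b]`. Appending `b` at position `k` adds `k * b` to the syndrome of `w`, while
prepending `0` shifts every bit of `w` up by one and adds `wt(w)`. So the two syndromes agree
modulo `2k` only if `2k ∣ (k + 1) * b - wt(v)`, and `0 < wt(v) < k` makes this
integer nonzero and smaller than `2k` in absolute value.
-/

/-- VT syndrome (as an integer sum) of a binary list. -/
def vtSynZ (l : List Bool) : ℤ :=
  ∑ i : Fin l.length, (((i : ℕ) + 1 : ℕ) : ℤ) * (if l.get i then 1 else 0)

theorem sum_ite_get_eq_count (l : List Bool) :
    ∑ i : Fin l.length, (if l.get i then (1 : ℤ) else 0) = l.count true := by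
  induction l with
  | nil => simp
  | cons b t ih =>
    simp only [List.length_cons, Fin.sum_univ_succ, List.get_cons_zero, List.get_cons_succ', ih]
    cases b <;> simp [add_comm]

theorem vtSynZ_cons (b : Bool) (l : List Bool) :
    vtSynZ (b :: l) = b.toNat + vtSynZ l + l.count true := by
  unfold vtSynZ
  simp only [List.length_cons, Fin.sum_univ_succ, List.get_cons_zero, List.get_cons_succ',
    Fin.val_zero, Fin.val_succ]
  rw [← sum_ite_get_eq_count, add_assoc, ← Finset.sum_add_distrib]
  congr 1
  · cases b <;> rfl
  · refine Finset.sum_congr rfl fun i _ => ?_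
    push_cast
    ring

theorem vtSynZ_append_singleton (l : List Bool) (b : Bool) :
    vtSynZ (l ++ [b]) = vtSynZ l + (l.length + 1) * b.toNat := by
  induction l with
  | nil => cases b <;> simp [vtSynZ]
  | cons c t ih =>
    rw [List.cons_append, vtSynZ_cons, ih, vtSynZ_cons, List.count_append]
    cases b <;> simp; ring

theorem vtSynZ_sub_vtSynZ_shift (w : List Bool) (b : Bool) :
    vtSynZ (w ++ [b]) - vtSynZ (false :: w)
      = ((w ++ [b]).length + 1) * b.toNat - (w ++ [b]).count true := by
  rw [vtSynZ_append_singleton, vtSynZ_cons, List.length_append, List.count_append]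
  cases b <;> simp

theorem not_dvd_succ_mul_sub {k c n : ℕ} (hn : n ≤ 1) (hc : 0 < c) (hck : c < k) :
    ¬ ((2 * k : ℕ) : ℤ) ∣ (k + 1) * n - c := by
  intro hdvd
  have := Int.eq_zero_of_abs_lt_dvd hdvd
  interval_cases n <;> simp [abs_lt] at this <;> omega

theorem stmt10_general (k : ℕ) (v : List Bool) (hlen : v.length = k) (a : ℤ)
    (hw : 0 < v.count true) (hw' : v.count true < k)
    (hv : vtSynZ v ≡ a [ZMOD (2 * k : ℕ)])
    (u' : List Bool) (hu' : u' = false :: v.dropLast) :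
    ¬ (vtSynZ u' ≡ a [ZMOD (2 * k : ℕ)]) := by
  intro hu
  obtain rfl | ⟨w, b, rfl⟩ := v.eq_nil_or_concat'
  · simp at hw
  rw [hu', List.dropLast_concat] at hu
  have hdvd := (hu.trans hv.symm).dvd
  rw [vtSynZ_sub_vtSynZ_shift, hlen] at hdvd
  exact not_dvd_succ_mul_sub (Bool.toNat_le b) hw hw' hdvd

theorem stmt10 (k : ℕ) (hk : 2 ≤ k) (v : List Bool) (hlen : v.length = k) (a : ℤ)
    (hw : 0 < v.count true) (hw' : v.count true < k)
    (hv : vtSynZ v ≡ a [ZMOD (2 * k : ℕ)])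
    (u' : List Bool) (hu' : u' = false :: v.dropLast) :
    ¬ (vtSynZ u' ≡ a [ZMOD (2 * k : ℕ)]) :=
  stmt10_general k v hlen a hw hw' hv u' hu'
end
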